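/- arXiv:math/0011249 — 2 statements merged into one kernel-verified Lean document; each statement's English description precedes it below -/
import Mathlib

section
/- The reduction-mod-p map is surjective from the integral symplectic group to the symplectic group over Z/pZ: for every prime p, every positive integer g, and every 2g×2g matrix M with entries in Z/pZ that preserves the standard symplectic form over Z/pZ, there exists a 2g×2g integer matrix N preserving the standard symplectic form over Z whose entrywise reduction modulo p equals M. -/
/-!
Over the field `ZMod p` every symplectic matrix is a product of symplectic transvections
`x ↦ x + l ⟨x, v⟩ v`. Suppose `A` is symplectic and fixes the basis vectors `e_i` with `i < k` or
`i > 2g - 1 - k`. Then `A` preserves their orthogonal complement, the middle block, which is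
nondegenerate. Transvections along middle vectors fix the outer `e_i` and act transitively on
nonzero middle vectors, so they bring `A e_k` back to `e_k`; those along middle vectors orthogonal
to `e_k` then bring the image of `e_{2g-1-k}` back as well. Induction on `k` reduces `A` to the
identity. Each transvection over `ZMod p` is the reduction of an integral one, which is symplectic
over `ℤ`, so the product lifts.
-/
open Finset

/-- The matrix of the standard symplectic form: `(e_i, e_j) = δ_{i+j, 2g+1}` for `i < j`
(with `1`-based indices; here indices are `0`-based, so the condition reads `i + j = 2g - 1`). -/
def sympJ (g : ℕ) (R : Type*) [Ring R] : Matrix (Fin (2 * g)) (Fin (2 * g)) R :=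
  fun i j =>
    if (i : ℕ) < (j : ℕ) ∧ (i : ℕ) + (j : ℕ) = 2 * g - 1 then 1
    else if (j : ℕ) < (i : ℕ) ∧ (i : ℕ) + (j : ℕ) = 2 * g - 1 then -1
    else 0

/-- The standard symplectic (bilinear antisymmetric) form on `R^{2g}`. -/
def symp (g : ℕ) (R : Type*) [CommRing R] (x y : Fin (2 * g) → R) : R :=
  ∑ i, ∑ j, x i * sympJ g R i j * y j

open Matrix

section Form

variable {g : ℕ} {R : Type*} [CommRing R]

-- Antisymmetry of `sympJ` alone would not give `symp g R x x = 0` in characteristic `2`.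
theorem exists_sympJ_eq_sub_transpose :
    ∃ U : Matrix (Fin (2 * g)) (Fin (2 * g)) R, sympJ g R = U - Uᵀ := by
  refine ⟨of fun i j => if (i : ℕ) < (j : ℕ) ∧ (i : ℕ) + (j : ℕ) = 2 * g - 1 then 1 else 0, ?_⟩
  ext i j
  simp only [sympJ, Matrix.sub_apply, transpose_apply, of_apply]
  split_ifs <;> (try simp) <;> omega

theorem sympJ_apply_eq_zero {i j : Fin (2 * g)} (h : i ≠ j.rev) : sympJ g R i j = 0 := by
  have : (i : ℕ) + j ≠ 2 * g - 1 := fun h' => h (Fin.ext (by simp [Fin.val_rev]; omega))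
  simp [sympJ, this]

theorem isUnit_sympJ_rev_apply (i : Fin (2 * g)) : IsUnit (sympJ g R i.rev i) := by
  unfold sympJ
  split_ifs <;> first | exact isUnit_one | exact isUnit_one.neg | (simp [Fin.val_rev] at *; omega)

theorem symp_eq_dotProduct (x y : Fin (2 * g) → R) : symp g R x y = x ⬝ᵥ sympJ g R *ᵥ y := by
  simp [symp, dotProduct, mulVec, Finset.mul_sum, mul_assoc]

@[simp]
theorem symp_self (x : Fin (2 * g) → R) : symp g R x x = 0 := by
  obtain ⟨U, hU⟩ := exists_sympJ_eq_sub_transpose (g := g) (R := R)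
  rw [symp_eq_dotProduct, hU, sub_mulVec, dotProduct_sub, dotProduct_mulVec x Uᵀ,
    vecMul_transpose, dotProduct_comm, sub_self]

@[simp]
theorem symp_add_left (x x' y : Fin (2 * g) → R) :
    symp g R (x + x') y = symp g R x y + symp g R x' y := by
  simp [symp_eq_dotProduct, add_dotProduct]

@[simp]
theorem symp_add_right (x y y' : Fin (2 * g) → R) :
    symp g R x (y + y') = symp g R x y + symp g R x y' := by
  simp [symp_eq_dotProduct, mulVec_add, dotProduct_add]

@[simp]
theorem symp_sub_right (x y y' : Fin (2 * g) → R) :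
    symp g R x (y - y') = symp g R x y - symp g R x y' := by
  simp [symp_eq_dotProduct, mulVec_sub, dotProduct_sub]

@[simp]
theorem symp_smul_left (c : R) (x y : Fin (2 * g) → R) :
    symp g R (c • x) y = c * symp g R x y := by
  simp [symp_eq_dotProduct, smul_dotProduct]

@[simp]
theorem symp_smul_right (c : R) (x y : Fin (2 * g) → R) :
    symp g R x (c • y) = c * symp g R x y := by
  simp [symp_eq_dotProduct, mulVec_smul, dotProduct_smul]

theorem symp_comm (x y : Fin (2 * g) → R) : symp g R y x = -symp g R x y := by
  have := symp_self (g := g) (x + y)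
  rw [symp_add_left, symp_add_right, symp_add_right, symp_self, symp_self] at this
  linear_combination this

theorem symp_single_right (x : Fin (2 * g) → R) (j : Fin (2 * g)) :
    symp g R x (Pi.single j 1) = x j.rev * sympJ g R j.rev j := by
  rw [symp_eq_dotProduct, mulVec_single_one, dotProduct, Finset.sum_eq_single j.rev]
  · rfl
  · intro i _ hi
    simp [sympJ_apply_eq_zero hi]
  · simp

theorem symp_single_right_eq_zero_iff (x : Fin (2 * g) → R) (j : Fin (2 * g)) :
    symp g R x (Pi.single j 1) = 0 ↔ x j.rev = 0 := by
  rw [symp_single_right, (isUnit_sympJ_rev_apply j).mul_left_eq_zero]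

end Form

def IsSymplectic {g : ℕ} {R : Type*} [CommRing R] (A : Matrix (Fin (2 * g)) (Fin (2 * g)) R) :
    Prop :=
  ∀ x y, symp g R (A *ᵥ x) (A *ᵥ y) = symp g R x y

section Transvection

variable {g : ℕ} {R : Type*} [CommRing R]

theorem IsSymplectic.mul {A B : Matrix (Fin (2 * g)) (Fin (2 * g)) R} (hA : IsSymplectic A)
    (hB : IsSymplectic B) : IsSymplectic (A * B) := fun x y => by
  rw [← mulVec_mulVec, ← mulVec_mulVec, hA, hB]

variable (g R) in
def symplecticGL : Subgroup (GL (Fin (2 * g)) R) where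
  carrier := {A | IsSymplectic (A : Matrix (Fin (2 * g)) (Fin (2 * g)) R)}
  mul_mem' hA hB := IsSymplectic.mul hA hB
  one_mem' x y := by simp
  inv_mem' {A} hA x y := by
    rw [← hA, mulVec_mulVec, mulVec_mulVec, Units.mul_inv, one_mulVec, one_mulVec]

variable (g R) in
def sympTransvection (v : Fin (2 * g) → R) (l : R) : Matrix (Fin (2 * g)) (Fin (2 * g)) R :=
  1 + l • vecMulVec v (sympJ g R *ᵥ v)

theorem sympTransvection_mulVec (v : Fin (2 * g) → R) (l : R) (x : Fin (2 * g) → R) :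
    sympTransvection g R v l *ᵥ x = x + (l * symp g R x v) • v := by
  rw [sympTransvection, add_mulVec, one_mulVec, smul_mulVec, vecMulVec_mulVec, op_smul_eq_smul,
    smul_smul, dotProduct_comm, ← symp_eq_dotProduct]

theorem sympTransvection_mul_neg (v : Fin (2 * g) → R) (l : R) :
    sympTransvection g R v l * sympTransvection g R v (-l) = 1 := by
  refine ext_iff_mulVec.2 fun x => ?_
  rw [← mulVec_mulVec, sympTransvection_mulVec, sympTransvection_mulVec, symp_add_left,
    symp_smul_left, symp_self, one_mulVec]
  module

theorem isSymplectic_sympTransvection (v : Fin (2 * g) → R) (l : R) :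
    IsSymplectic (sympTransvection g R v l) := fun x y => by
  simp only [sympTransvection_mulVec, symp_add_left, symp_add_right, symp_smul_left,
    symp_smul_right, symp_self, symp_comm v y]
  ring

variable (g R) in
def sympTransvectionGL (v : Fin (2 * g) → R) (l : R) : GL (Fin (2 * g)) R where
  val := sympTransvection g R v l
  inv := sympTransvection g R v (-l)
  val_inv := sympTransvection_mul_neg v l
  inv_val := by simpa using sympTransvection_mul_neg v (-l)

variable (g R) in
def transvectionGroupOn (S : Set (Fin (2 * g) → R)) : Subgroup (GL (Fin (2 * g)) R) :=
  Subgroup.closure {T | ∃ v ∈ S, ∃ l, sympTransvectionGL g R v l = T}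

theorem sympTransvectionGL_mem_transvectionGroupOn {S : Set (Fin (2 * g) → R)}
    {v : Fin (2 * g) → R} (hv : v ∈ S) (l : R) :
    sympTransvectionGL g R v l ∈ transvectionGroupOn g R S :=
  Subgroup.subset_closure ⟨v, hv, l, rfl⟩

theorem transvectionGroupOn_mono {S S' : Set (Fin (2 * g) → R)} (h : S ⊆ S') :
    transvectionGroupOn g R S ≤ transvectionGroupOn g R S' :=
  Subgroup.closure_mono fun _ ⟨v, hv, l, hT⟩ => ⟨v, h hv, l, hT⟩

theorem transvectionGroupOn_le_symplecticGL (S : Set (Fin (2 * g) → R)) :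
    transvectionGroupOn g R S ≤ symplecticGL g R :=
  Subgroup.closure_le _ |>.2 fun _ ⟨v, _, l, hT⟩ => hT ▸ isSymplectic_sympTransvection v l

theorem isSymplectic_of_mem_transvectionGroupOn {S : Set (Fin (2 * g) → R)}
    {T : GL (Fin (2 * g)) R} (hT : T ∈ transvectionGroupOn g R S) :
    IsSymplectic (T : Matrix (Fin (2 * g)) (Fin (2 * g)) R) :=
  transvectionGroupOn_le_symplecticGL S hT

theorem mulVec_eq_self_of_mem_transvectionGroupOn {S : Set (Fin (2 * g) → R)}
    {T : GL (Fin (2 * g)) R} (hT : T ∈ transvectionGroupOn g R S) {z : Fin (2 * g) → R}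
    (hz : ∀ v ∈ S, symp g R z v = 0) : (T : Matrix _ _ R) *ᵥ z = z := by
  induction hT using Subgroup.closure_induction with
  | mem T hT =>
    obtain ⟨v, hv, l, rfl⟩ := hT
    simp [sympTransvectionGL, sympTransvection_mulVec, hz v hv]
  | one => simp
  | mul T T' _ _ hT hT' => rw [Units.val_mul, ← mulVec_mulVec, hT', hT]
  | inv T _ hT => rw [← hT, mulVec_mulVec, Units.inv_mul, one_mulVec, hT]

end Transvection

section Map

variable {g : ℕ} {R S : Type*} [CommRing R] [CommRing S] (f : R →+* S)

theorem sympJ_map : (sympJ g R).map f = sympJ g S := by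
  ext i j
  simp only [sympJ, map_apply]
  split_ifs <;> simp

theorem map_sympTransvectionGL (v : Fin (2 * g) → R) (l : R) :
    Matrix.GeneralLinearGroup.map f (sympTransvectionGL g R v l) =
      sympTransvectionGL g S (f ∘ v) (f l) := by
  ext i j
  simp [sympTransvectionGL, sympTransvection, vecMulVec_apply, RingHom.map_mulVec, sympJ_map,
    one_apply, apply_ite f]

theorem transvectionGroupOn_univ_le_map (hf : Function.Surjective f) :
    transvectionGroupOn g S Set.univ ≤
      (transvectionGroupOn g R Set.univ).map (Matrix.GeneralLinearGroup.map f) := by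
  refine Subgroup.closure_le _ |>.2 fun _ ⟨v, _, l, hT⟩ => ?_
  obtain ⟨v', rfl⟩ := hf.comp_left v
  obtain ⟨l', rfl⟩ := hf l
  exact ⟨_, sympTransvectionGL_mem_transvectionGroupOn (Set.mem_univ v') l',
    hT ▸ map_sympTransvectionGL f v' l'⟩

end Map

namespace transvectionGroupOn

variable {g : ℕ} {F : Type*} [Field F] {S : Set (Fin (2 * g) → F)} {u v : Fin (2 * g) → F}

theorem exists_mulVec_eq_of_symp_ne_zero (hS : v - u ∈ S) (h : symp g F u v ≠ 0) :
    ∃ T ∈ transvectionGroupOn g F S, (T : Matrix _ _ F) *ᵥ u = v := by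
  refine ⟨_, sympTransvectionGL_mem_transvectionGroupOn hS (symp g F u v)⁻¹, ?_⟩
  rw [sympTransvectionGL, Units.val_mk, sympTransvection_mulVec, symp_sub_right, symp_self,
    sub_zero, inv_mul_cancel₀ h, one_smul, add_sub_cancel]

theorem exists_mulVec_eq_of_symp_ne_zero_through (z : Fin (2 * g) → F) (hSu : z - u ∈ S)
    (hSv : v - z ∈ S) (hu : symp g F u z ≠ 0) (hv : symp g F z v ≠ 0) :
    ∃ T ∈ transvectionGroupOn g F S, (T : Matrix _ _ F) *ᵥ u = v := by
  obtain ⟨T, hT, hTu⟩ := exists_mulVec_eq_of_symp_ne_zero hSu hu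
  obtain ⟨T', hT', hT'z⟩ := exists_mulVec_eq_of_symp_ne_zero hSv hv
  exact ⟨T' * T, mul_mem hT' hT, by rw [Units.val_mul, ← mulVec_mulVec, hTu, hT'z]⟩

theorem exists_mulVec_eq_of_nondegenerate (W : Submodule F (Fin (2 * g) → F))
    (hW : ∀ u ∈ W, u ≠ 0 → ∃ z ∈ W, symp g F u z ≠ 0) (hu : u ∈ W) (hv : v ∈ W)
    (hu0 : u ≠ 0) (hv0 : v ≠ 0) :
    ∃ T ∈ transvectionGroupOn g F W, (T : Matrix _ _ F) *ᵥ u = v := by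
  obtain ⟨a, ha, hua⟩ := hW u hu hu0
  obtain ⟨b, hb, hvb⟩ := hW v hv hv0
  rw [symp_comm, neg_ne_zero] at hvb
  obtain ⟨z, hz, huz, hzv⟩ : ∃ z ∈ W, symp g F u z ≠ 0 ∧ symp g F z v ≠ 0 := by
    by_cases hav : symp g F a v = 0
    · by_cases hub : symp g F u b = 0
      · exact ⟨a + b, W.add_mem ha hb, by simpa [hub], by simpa [hav]⟩
      · exact ⟨b, hb, hub, hvb⟩
    · exact ⟨a, ha, hua, hav⟩
  exact exists_mulVec_eq_of_symp_ne_zero_through z (W.sub_mem hz hu) (W.sub_mem hv hz) huz hzv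

theorem exists_mulVec_eq_of_symp_eq (W : Submodule F (Fin (2 * g) → F))
    {e : Fin (2 * g) → F} (he : e ∈ W) (hu : u ∈ W) (hv : v ∈ W) (heu : symp g F e u ≠ 0)
    (huv : symp g F e u = symp g F e v) :
    ∃ T ∈ transvectionGroupOn g F {w | w ∈ W ∧ symp g F e w = 0},
      (T : Matrix _ _ F) *ᵥ u = v := by
  by_cases h : symp g F u v = 0
  · refine exists_mulVec_eq_of_symp_ne_zero_through (u + e) ⟨?_, ?_⟩ ⟨?_, ?_⟩ ?_ ?_
    · simpa using he
    · simp
    · exact W.sub_mem hv (W.add_mem hu he)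
    · simp [huv]
    · simpa [symp_comm e u] using heu
    · simpa [h, ← huv] using heu
  · exact exists_mulVec_eq_of_symp_ne_zero ⟨W.sub_mem hv hu, by simp [huv]⟩ h

end transvectionGroupOn

def outerIndices (g k : ℕ) : Set (Fin (2 * g)) := {i | (i : ℕ) < k ∨ (i.rev : ℕ) < k}

theorem rev_mem_outerIndices {g k : ℕ} {i : Fin (2 * g)} :
    i.rev ∈ outerIndices g k ↔ i ∈ outerIndices g k := by
  simp only [outerIndices, Set.mem_ofPred_eq, Fin.rev_rev, or_comm]

section Middle

variable {g k : ℕ} {R : Type*} [CommRing R]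

variable (g R) in
def middleSubmodule (k : ℕ) : Submodule R (Fin (2 * g) → R) :=
  Submodule.pi (outerIndices g k) fun _ => ⊥

theorem mem_middleSubmodule {v : Fin (2 * g) → R} :
    v ∈ middleSubmodule g R k ↔ ∀ i ∈ outerIndices g k, v i = 0 := by
  simp [middleSubmodule, Submodule.mem_pi]

theorem single_mem_middleSubmodule {i : Fin (2 * g)} (hi : i ∉ outerIndices g k) :
    Pi.single i 1 ∈ middleSubmodule g R k :=
  mem_middleSubmodule.2 fun _ hj => Pi.single_eq_of_ne (ne_of_mem_of_not_mem hj hi) 1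

theorem symp_single_left_eq_zero_of_mem_middleSubmodule {i : Fin (2 * g)}
    (hi : i ∈ outerIndices g k) {w : Fin (2 * g) → R} (hw : w ∈ middleSubmodule g R k) :
    symp g R (Pi.single i 1) w = 0 := by
  rw [symp_comm, neg_eq_zero, symp_single_right_eq_zero_iff]
  exact mem_middleSubmodule.1 hw _ (rev_mem_outerIndices.2 hi)

theorem exists_symp_ne_zero_of_mem_middleSubmodule {u : Fin (2 * g) → R}
    (hu : u ∈ middleSubmodule g R k) (hu0 : u ≠ 0) :
    ∃ z ∈ middleSubmodule g R k, symp g R u z ≠ 0 := by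
  obtain ⟨i, hi⟩ := Function.ne_iff.1 hu0
  have hi' : i.rev ∉ outerIndices g k := rev_mem_outerIndices.not.2
    fun h => hi (mem_middleSubmodule.1 hu i h)
  refine ⟨_, single_mem_middleSubmodule hi', ?_⟩
  rwa [Ne, symp_single_right_eq_zero_iff, Fin.rev_rev]

theorem mulVec_single_eq_self_of_mem_transvectionGroupOn {S : Set (Fin (2 * g) → R)}
    (hS : S ⊆ middleSubmodule g R k) {T : GL (Fin (2 * g)) R}
    (hT : T ∈ transvectionGroupOn g R S) {i : Fin (2 * g)} (hi : i ∈ outerIndices g k) :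
    (T : Matrix _ _ R) *ᵥ Pi.single i 1 = Pi.single i 1 :=
  mulVec_eq_self_of_mem_transvectionGroupOn hT fun _ hv =>
    symp_single_left_eq_zero_of_mem_middleSubmodule hi (hS hv)

-- The middle block is the orthogonal complement of the outer basis vectors.
theorem IsSymplectic.mulVec_mem_middleSubmodule {A : Matrix (Fin (2 * g)) (Fin (2 * g)) R}
    (hA : IsSymplectic A)
    (hfix : ∀ i ∈ outerIndices g k, A *ᵥ Pi.single i 1 = Pi.single i 1)
    {x : Fin (2 * g) → R} (hx : x ∈ middleSubmodule g R k) : A *ᵥ x ∈ middleSubmodule g R k := by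
  refine mem_middleSubmodule.2 fun j hj => ?_
  have hj' := rev_mem_outerIndices.2 hj
  rw [← Fin.rev_rev j, ← symp_single_right_eq_zero_iff, ← hfix _ hj', hA,
    symp_single_right_eq_zero_iff, Fin.rev_rev]
  exact mem_middleSubmodule.1 hx j hj

end Middle

section Generation

variable {g k : ℕ} {F : Type*} [Field F] {A : Matrix (Fin (2 * g)) (Fin (2 * g)) F}

theorem IsSymplectic.exists_transvections_mul_fix_single (hA : IsSymplectic A)
    (hfix : ∀ j ∈ outerIndices g k, A *ᵥ Pi.single j 1 = Pi.single j 1)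
    {i : Fin (2 * g)} (hi : i ∉ outerIndices g k) :
    ∃ T ∈ transvectionGroupOn g F (middleSubmodule g F k),
      ((T : Matrix _ _ F) * A) *ᵥ Pi.single i 1 = Pi.single i 1 := by
  have hAi0 : A *ᵥ Pi.single i 1 ≠ 0 := by
    have : symp g F (A *ᵥ Pi.single i 1) (A *ᵥ Pi.single i.rev 1) ≠ 0 := by
      rw [hA, Ne, symp_single_right_eq_zero_iff, Fin.rev_rev]
      simp
    rintro h
    simp [h, symp_eq_dotProduct] at this
  obtain ⟨T, hT, hTA⟩ := transvectionGroupOn.exists_mulVec_eq_of_nondegenerate _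
    (fun _ => exists_symp_ne_zero_of_mem_middleSubmodule)
    (hA.mulVec_mem_middleSubmodule hfix (single_mem_middleSubmodule hi))
    (single_mem_middleSubmodule hi) hAi0 (by simp)
  exact ⟨T, hT, by rw [← mulVec_mulVec, hTA]⟩

theorem IsSymplectic.exists_transvections_mul_fix_single_rev (hA : IsSymplectic A)
    (hfix : ∀ j ∈ outerIndices g k, A *ᵥ Pi.single j 1 = Pi.single j 1)
    {i : Fin (2 * g)} (hi : i ∉ outerIndices g k) (hAi : A *ᵥ Pi.single i 1 = Pi.single i 1) :
    ∃ T ∈ transvectionGroupOn g F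
        {w | w ∈ middleSubmodule g F k ∧ symp g F (Pi.single i 1) w = 0},
      ((T : Matrix _ _ F) * A) *ᵥ Pi.single i.rev 1 = Pi.single i.rev 1 := by
  have hi' : i.rev ∉ outerIndices g k := rev_mem_outerIndices.not.2 hi
  obtain ⟨T, hT, hTA⟩ := transvectionGroupOn.exists_mulVec_eq_of_symp_eq _
    (single_mem_middleSubmodule hi)
    (hA.mulVec_mem_middleSubmodule hfix (single_mem_middleSubmodule hi'))
    (single_mem_middleSubmodule hi')
    (by rw [← hAi, hA, Ne, symp_single_right_eq_zero_iff, Fin.rev_rev]; simp)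
    (by rw [← hAi, hA, hAi])
  exact ⟨T, hT, by rw [← mulVec_mulVec, hTA]⟩

theorem IsSymplectic.exists_transvections_mul_fix_pair (hA : IsSymplectic A)
    (hfix : ∀ j ∈ outerIndices g k, A *ᵥ Pi.single j 1 = Pi.single j 1)
    {i : Fin (2 * g)} (hi : i ∉ outerIndices g k) :
    ∃ T ∈ transvectionGroupOn g F Set.univ, ∀ j, j ∈ outerIndices g k ∨ j = i ∨ j = i.rev →
      ((T : Matrix _ _ F) * A) *ᵥ Pi.single j 1 = Pi.single j 1 := by
  obtain ⟨T₁, hT₁, h₁⟩ := hA.exists_transvections_mul_fix_single hfix hi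
  have hfix₁ : ∀ j ∈ outerIndices g k,
      ((T₁ : Matrix _ _ F) * A) *ᵥ Pi.single j 1 = Pi.single j 1 := fun j hj => by
    rw [← mulVec_mulVec, hfix j hj,
      mulVec_single_eq_self_of_mem_transvectionGroupOn subset_rfl hT₁ hj]
  obtain ⟨T₂, hT₂, h₂⟩ := ((isSymplectic_of_mem_transvectionGroupOn hT₁).mul hA)
    |>.exists_transvections_mul_fix_single_rev hfix₁ hi h₁
  refine ⟨T₂ * T₁, mul_mem (transvectionGroupOn_mono (Set.subset_univ _) hT₂)
    (transvectionGroupOn_mono (Set.subset_univ _) hT₁), ?_⟩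
  rintro j (hj | rfl | rfl) <;> rw [Units.val_mul, mul_assoc]
  · rw [← mulVec_mulVec, hfix₁ j hj,
      mulVec_single_eq_self_of_mem_transvectionGroupOn (fun _ hw => hw.1) hT₂ hj]
  · rw [← mulVec_mulVec, h₁, mulVec_eq_self_of_mem_transvectionGroupOn hT₂ fun _ hw => hw.2]
  · exact h₂

theorem IsSymplectic.exists_transvections_mul_fix_outer (hA : IsSymplectic A) (hk : k ≤ g) :
    ∃ T ∈ transvectionGroupOn g F Set.univ, ∀ j ∈ outerIndices g k,
      ((T : Matrix _ _ F) * A) *ᵥ Pi.single j 1 = Pi.single j 1 := by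
  induction k with
  | zero => exact ⟨1, one_mem _, by simp [outerIndices]⟩
  | succ k ih =>
    obtain ⟨T, hT, hfix⟩ := ih (by omega)
    obtain ⟨T', hT', hfix'⟩ := ((isSymplectic_of_mem_transvectionGroupOn hT).mul hA)
      |>.exists_transvections_mul_fix_pair hfix
      (i := ⟨k, by omega⟩) (by simp [outerIndices, Fin.val_rev]; omega)
    refine ⟨T' * T, mul_mem hT' hT, fun j hj => ?_⟩
    rw [Units.val_mul, mul_assoc]
    refine hfix' j ?_
    simp only [outerIndices, Set.mem_ofPred_eq, Fin.ext_iff, Fin.val_rev] at hj ⊢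
    omega

theorem IsSymplectic.exists_mem_transvectionGroupOn_val_eq (hA : IsSymplectic A) :
    ∃ T ∈ transvectionGroupOn g F Set.univ, (T : Matrix _ _ F) = A := by
  obtain ⟨T, hT, hfix⟩ := hA.exists_transvections_mul_fix_outer le_rfl
  have hTA : (T : Matrix _ _ F) * A = 1 := ext_of_mulVec_single fun j => by
    rw [one_mulVec, hfix j (by simp [outerIndices, Fin.val_rev]; omega)]
  exact ⟨T⁻¹, inv_mem hT, Units.inv_eq_of_mul_eq_one_right hTA⟩

end Generation

theorem symplectic_mod_p_lifts_general (p : ℕ) (hp : p.Prime) (g : ℕ)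
    (M : Matrix (Fin (2 * g)) (Fin (2 * g)) (ZMod p))
    (hM : ∀ x y, symp g (ZMod p) (M.mulVec x) (M.mulVec y) = symp g (ZMod p) x y) :
    ∃ N : Matrix (Fin (2 * g)) (Fin (2 * g)) ℤ,
      (∀ x y, symp g ℤ (N.mulVec x) (N.mulVec y) = symp g ℤ x y) ∧
      N.map (Int.cast : ℤ → ZMod p) = M := by
  have : Fact p.Prime := ⟨hp⟩
  obtain ⟨T, hT, rfl⟩ := IsSymplectic.exists_mem_transvectionGroupOn_val_eq hM
  obtain ⟨N, hN, rfl⟩ :=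
    transvectionGroupOn_univ_le_map (Int.castRingHom (ZMod p)) ZMod.intCast_surjective hT
  exact ⟨N, isSymplectic_of_mem_transvectionGroupOn hN, rfl⟩

/-- reduction mod `p` maps the integral symplectic group onto the
symplectic group over `ℤ/pℤ`. -/
theorem symplectic_mod_p_lifts (p : ℕ) (hp : p.Prime) (g : ℕ) (hg : 0 < g)
    (M : Matrix (Fin (2 * g)) (Fin (2 * g)) (ZMod p))
    (hM : ∀ x y, symp g (ZMod p) (M.mulVec x) (M.mulVec y) = symp g (ZMod p) x y) :
    ∃ N : Matrix (Fin (2 * g)) (Fin (2 * g)) ℤ,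
      (∀ x y, symp g ℤ (N.mulVec x) (N.mulVec y) = symp g ℤ x y) ∧
      N.map (Int.cast : ℤ → ZMod p) = M :=
  symplectic_mod_p_lifts_general p hp g M hM
end

section
/- Witt extension for the standard symplectic form over Z/pZ: let p be a prime, g a positive integer, let G and G' be linear subspaces of (Z/pZ)^{2g}, and let ψ : G → G' be a linear isomorphism such that (ψ(a), ψ(b))_p = (a, b)_p for all a, b ∈ G, where (.,.)_p is the standard symplectic form on (Z/pZ)^{2g}. Then there exists a linear automorphism Ψ of (Z/pZ)^{2g} preserving the standard symplectic form whose restriction to G equals ψ. -/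
open Finset

/-!
Witt's extension theorem holds for every nondegenerate alternating form `B` on a
finite-dimensional space; the standard symplectic form is one, since its matrix pairs `i` with
`2g - 1 - i` through entries `±1`.

An isometric embedding `F` of a subspace `D` is extended one vector `v ∉ D` at a time, by
`v ↦ w` for some `w ∉ F D` with `B w (F u) = B v u` on `D`; this is isometric because
`B v v = 0 = B w w`. The admissible `w` form a coset of `(F D)ᗮ`, so one of them avoids `F D`
unless `(F D)ᗮ ⊆ F D`. In that case, pulling `(F D)ᗮ` back through `F` and counting dimensions
gives `Dᗮ ⊆ D`, and a solution `w = F u₀` would put `v - u₀` into `Dᗮ ⊆ D`, i.e. `v ∈ D`.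
-/

lemma sympJ_antisymm (g : ℕ) (R : Type*) [CommRing R] (i j : Fin (2 * g)) :
    sympJ g R j i = -sympJ g R i j := by
  simp only [sympJ]
  split_ifs <;> first | ring1 | (exfalso; omega)

lemma sympJ_eq_zero_of_ne_rev (g : ℕ) (R : Type*) [Ring R] {i j : Fin (2 * g)} (h : j ≠ i.rev) :
    sympJ g R i j = 0 := by
  have hij : (i : ℕ) + j ≠ 2 * g - 1 := fun h' => h (Fin.ext (by rw [Fin.val_rev]; omega))
  simp [sympJ, hij]

lemma isUnit_sympJ_rev (g : ℕ) (R : Type*) [Ring R] (i : Fin (2 * g)) :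
    IsUnit (sympJ g R i i.rev) := by
  have hi := i.isLt
  simp only [sympJ, Fin.val_rev]
  split_ifs
  · exact isUnit_one
  · exact isUnit_one.neg
  · omega

lemma symp_eq_sum_rev (g : ℕ) (R : Type*) [CommRing R] (x y : Fin (2 * g) → R) :
    symp g R x y = ∑ i, x i * sympJ g R i i.rev * y i.rev := by
  refine Finset.sum_congr rfl fun i _ => Finset.sum_eq_single i.rev (fun j _ hj => ?_) (by simp)
  rw [sympJ_eq_zero_of_ne_rev g R hj, mul_zero, zero_mul]

def sympForm (g : ℕ) (R : Type*) [CommRing R] : LinearMap.BilinForm R (Fin (2 * g) → R) :=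
  Matrix.toBilin' (sympJ g R)

lemma sympForm_apply (g : ℕ) (R : Type*) [CommRing R] (x y : Fin (2 * g) → R) :
    sympForm g R x y = symp g R x y :=
  Matrix.toBilin'_apply _ _ _

lemma sympForm_isAlt (g : ℕ) (R : Type*) [CommRing R] : (sympForm g R).IsAlt := by
  intro x
  rw [sympForm_apply, symp_eq_sum_rev]
  refine Finset.sum_ninvolution Fin.rev (fun i => ?_) (fun i _ h => ?_) (by simp) Fin.rev_rev
  · rw [Fin.rev_rev, sympJ_antisymm]
    ring
  · have hi := i.isLt
    have hrev := congrArg Fin.val h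
    rw [Fin.val_rev] at hrev
    omega

lemma sympForm_nondegenerate (g : ℕ) (R : Type*) [CommRing R] :
    (sympForm g R).Nondegenerate := by
  refine (sympForm_isAlt g R).isRefl.nondegenerate_iff_separatingLeft.mpr
    fun x hx => funext fun i => ?_
  have hi := hx (Pi.single i.rev 1)
  simp only [sympForm_apply, symp_eq_sum_rev, Pi.single_apply, Fin.rev_inj] at hi
  simpa [(isUnit_sympJ_rev g R i).mul_left_eq_zero] using hi

lemma LinearPMap.exists_supSpanSingleton_apply_eq {K E F : Type*} [DivisionRing K]
    [AddCommGroup E] [Module K E] [AddCommGroup F] [Module K F] (f : E →ₗ.[K] F) {x : E} (y : F)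
    (hx : x ∉ f.domain) (z : (f.supSpanSingleton x y hx).domain) :
    ∃ (a : f.domain) (c : K), (z : E) = a + c • x ∧ f.supSpanSingleton x y hx z = f a + c • y := by
  obtain ⟨z, hz⟩ := z
  obtain ⟨a, ha, _, hc, rfl⟩ := Submodule.mem_sup.mp hz
  obtain ⟨c, rfl⟩ := Submodule.mem_span_singleton.mp hc
  exact ⟨⟨a, ha⟩, c, rfl, f.supSpanSingleton_apply_mk x y hx a ha c⟩

namespace LinearMap.BilinForm

open Module Submodule
open LinearMap (BilinForm)

variable {K V : Type*} [Field K] [AddCommGroup V] [Module K V]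

/-- Injectivity is not automatic: `B` may vanish on the domain. -/
def IsIsometricPMap (B : BilinForm K V) (F : V →ₗ.[K] V) : Prop :=
  Function.Injective F ∧ ∀ a b : F.domain, B (F a) (F b) = B a b

variable {B : BilinForm K V}

lemma exists_forall_apply_eq_of_injective [FiniteDimensional K V] (hnd : B.Nondegenerate)
    {U : Type*} [AddCommGroup U] [Module K U] {f : U →ₗ[K] V} (hf : Function.Injective f)
    (φ : U →ₗ[K] K) : ∃ w, ∀ u, B w (f u) = φ u := by
  obtain ⟨g, hg⟩ := f.exists_leftInverse_of_injective (LinearMap.ker_eq_bot.mpr hf)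
  refine ⟨(B.toDual hnd).symm (φ ∘ₗ g), fun u => ?_⟩
  rw [← toDual_def hnd, LinearEquiv.apply_symm_apply, LinearMap.comp_apply,
    ← LinearMap.comp_apply g f, hg, LinearMap.id_apply]

lemma IsIsometricPMap.orthogonal_le_of_orthogonal_range_le [FiniteDimensional K V]
    (hnd : B.Nondegenerate) {F : V →ₗ.[K] V} (hF : B.IsIsometricPMap F)
    (h : B.orthogonal (range F.toFun) ≤ range F.toFun) : B.orthogonal F.domain ≤ F.domain := by
  set T := (B.orthogonal (range F.toFun)).comap F.toFun
  have hT : T.map F.domain.subtype ≤ B.orthogonal F.domain := by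
    rintro _ ⟨x, hx, rfl⟩
    refine (mem_orthogonal_iff).mpr fun n hn => ?_
    change B (⟨n, hn⟩ : F.domain) x = 0
    rw [← hF.2]
    exact hx _ (mem_range_self _ _)
  have hrank : finrank K (B.orthogonal F.domain) = finrank K (T.map F.domain.subtype) :=
    calc finrank K (B.orthogonal F.domain)
        = finrank K (B.orthogonal (range F.toFun)) := by
          rw [finrank_orthogonal hnd, finrank_orthogonal hnd, finrank_range_of_inj hF.1]
      _ = finrank K (T.map F.toFun) := by rw [map_comap_eq_of_le h]
      _ = finrank K (T.map F.domain.subtype) := by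
          rw [← (equivMapOfInjective _ hF.1 T).finrank_eq, finrank_map_subtype_eq]
  exact (eq_of_le_of_finrank_le hT hrank.le).symm ▸ map_subtype_le _ _

lemma IsIsometricPMap.exists_notMem_range [FiniteDimensional K V] (hB : B.IsRefl)
    (hnd : B.Nondegenerate) {F : V →ₗ.[K] V} (hF : B.IsIsometricPMap F) {v : V}
    (hv : v ∉ F.domain) : ∃ w ∉ range F.toFun, ∀ u : F.domain, B w (F u) = B v u := by
  obtain ⟨w₀, hw₀⟩ : ∃ w₀, ∀ u : F.domain, B w₀ (F u) = B v u :=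
    exists_forall_apply_eq_of_injective hnd hF.1 ((B v).comp F.domain.subtype)
  by_cases hR : B.orthogonal (range F.toFun) ≤ range F.toFun
  · refine ⟨w₀, ?_, hw₀⟩
    rintro ⟨u₀, rfl⟩
    have hperp : v - u₀ ∈ B.orthogonal F.domain := fun u hu => by
      refine hB _ _ ?_
      rw [map_sub, LinearMap.sub_apply, sub_eq_zero, ← hF.2 u₀ ⟨u, hu⟩]
      exact (hw₀ ⟨u, hu⟩).symm
    have hmem := F.domain.add_mem (hF.orthogonal_le_of_orthogonal_range_le hnd hR hperp) u₀.2
    exact hv (by simpa using hmem)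
  · obtain ⟨z, hz, hzR⟩ := SetLike.not_le_iff_exists.mp hR
    by_cases hw₀R : w₀ ∈ range F.toFun
    · refine ⟨w₀ + z, fun h => hzR (by simpa using sub_mem h hw₀R), fun u => ?_⟩
      have hzu : B z (F u) = 0 := hB _ _ (hz _ (mem_range_self _ u))
      rw [map_add, LinearMap.add_apply, hw₀, hzu, add_zero]
    · exact ⟨w₀, hw₀R, hw₀⟩

lemma IsIsometricPMap.supSpanSingleton (hB : B.IsAlt) {F : V →ₗ.[K] V}
    (hF : B.IsIsometricPMap F) {v w : V} (hv : v ∉ F.domain) (hw : w ∉ range F.toFun)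
    (hvw : ∀ u : F.domain, B w (F u) = B v u) :
    B.IsIsometricPMap (F.supSpanSingleton v w hv) := by
  constructor
  · refine (injective_iff_map_eq_zero _).mpr fun z hz => ?_
    obtain ⟨a, c, hza, hFz⟩ := F.exists_supSpanSingleton_apply_eq w hv z
    change F.supSpanSingleton v w hv z = 0 at hz
    rw [hFz] at hz
    rcases eq_or_ne c 0 with rfl | hc
    · rw [zero_smul, add_zero] at hz
      have ha : a = 0 := hF.1 (hz.trans F.map_zero.symm)
      exact Subtype.ext (by simp [hza, ha])
    · refine absurd ⟨-(c⁻¹ • a), ?_⟩ hw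
      change F (-(c⁻¹ • a)) = w
      rw [F.map_neg, F.map_smul, ← smul_neg, ← eq_neg_of_add_eq_zero_right hz, smul_smul,
        inv_mul_cancel₀ hc, one_smul]
  · intro z z'
    obtain ⟨a, c, hza, hFz⟩ := F.exists_supSpanSingleton_apply_eq w hv z
    obtain ⟨a', c', hza', hFz'⟩ := F.exists_supSpanSingleton_apply_eq w hv z'
    have hwa : B (F a) w = B a v := by rw [← LinearMap.IsAlt.neg hB, hvw, LinearMap.IsAlt.neg hB]
    rw [hFz, hFz', hza, hza']
    simp only [map_add, map_smul, LinearMap.add_apply, LinearMap.smul_apply, smul_eq_mul,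
      hF.2 a a', hvw, hwa, hB.self_eq_zero]

lemma IsIsometricPMap.exists_linearEquiv_of_domain_eq_top [FiniteDimensional K V]
    {F : V →ₗ.[K] V} (hF : B.IsIsometricPMap F) (htop : F.domain = ⊤) :
    ∃ Ψ : V ≃ₗ[K] V, (∀ x y, B (Ψ x) (Ψ y) = B x y) ∧ ∀ x : F.domain, Ψ x = F x := by
  let e := (LinearEquiv.ofTop F.domain htop).symm
  have hinj : Function.Injective (F.toFun ∘ₗ e.toLinearMap) := hF.1.comp e.injective
  exact ⟨LinearEquiv.ofInjectiveEndo _ hinj, fun x y => hF.2 (e x) (e y), fun x => rfl⟩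

theorem IsIsometricPMap.exists_linearEquiv_extension [FiniteDimensional K V] (hB : B.IsAlt)
    (hnd : B.Nondegenerate) {F : V →ₗ.[K] V} (hF : B.IsIsometricPMap F) :
    ∃ Ψ : V ≃ₗ[K] V, (∀ x y, B (Ψ x) (Ψ y) = B x y) ∧ ∀ x : F.domain, Ψ x = F x := by
  by_cases htop : F.domain = ⊤
  · exact hF.exists_linearEquiv_of_domain_eq_top htop
  obtain ⟨v, hv⟩ := not_forall.mp (mt eq_top_iff'.mpr htop)
  obtain ⟨w, hw, hvw⟩ := hF.exists_notMem_range hB.isRefl hnd hv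
  have hlt : finrank K F.domain < finrank K (F.supSpanSingleton v w hv).domain :=
    finrank_lt_finrank_of_lt (lt_sup_iff_notMem.mpr hv)
  have hle := (F.supSpanSingleton v w hv).domain.finrank_le
  obtain ⟨Ψ, hΨ, hΨF⟩ := (hF.supSpanSingleton hB hv hw hvw).exists_linearEquiv_extension hB hnd
  refine ⟨Ψ, hΨ, fun x => ?_⟩
  rw [hΨF ⟨x, mem_sup_left x.2⟩]
  exact ((F.left_le_sup _ _).2 (x := x) (y := ⟨x, mem_sup_left x.2⟩) rfl).symm
termination_by finrank K V - finrank K F.domain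
decreasing_by omega

end LinearMap.BilinForm

theorem witt_extension_symplectic_general (p : ℕ) (hp : p.Prime) (g : ℕ)
    (G G' : Submodule (ZMod p) (Fin (2 * g) → ZMod p))
    (ψ : G ≃ₗ[ZMod p] G')
    (hψ : ∀ a b : G, symp g (ZMod p) ((ψ a : G') : Fin (2 * g) → ZMod p)
        ((ψ b : G') : Fin (2 * g) → ZMod p) = symp g (ZMod p) (a : Fin (2 * g) → ZMod p) b) :
    ∃ Ψ : (Fin (2 * g) → ZMod p) ≃ₗ[ZMod p] (Fin (2 * g) → ZMod p),
      (∀ x y, symp g (ZMod p) (Ψ x) (Ψ y) = symp g (ZMod p) x y) ∧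
      ∀ v : G, Ψ (v : Fin (2 * g) → ZMod p) = ((ψ v : G') : Fin (2 * g) → ZMod p) := by
  have : Fact p.Prime := ⟨hp⟩
  let F : (Fin (2 * g) → ZMod p) →ₗ.[ZMod p] (Fin (2 * g) → ZMod p) := ⟨G, G'.subtype ∘ₗ ψ⟩
  have hF : (sympForm g (ZMod p)).IsIsometricPMap F :=
    ⟨Subtype.val_injective.comp ψ.injective, fun a b => by
      rw [sympForm_apply, sympForm_apply]
      exact hψ a b⟩
  obtain ⟨Ψ, hΨ, hΨF⟩ :=
    hF.exists_linearEquiv_extension (sympForm_isAlt g _) (sympForm_nondegenerate g _)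
  exact ⟨Ψ, fun x y => by simpa only [sympForm_apply] using hΨ x y, hΨF⟩

/-- Witt extension for the standard symplectic form over `ℤ/pℤ`. -/
theorem witt_extension_symplectic (p : ℕ) (hp : p.Prime) (g : ℕ) (hg : 0 < g)
    (G G' : Submodule (ZMod p) (Fin (2 * g) → ZMod p))
    (ψ : G ≃ₗ[ZMod p] G')
    (hψ : ∀ a b : G, symp g (ZMod p) ((ψ a : G') : Fin (2 * g) → ZMod p)
        ((ψ b : G') : Fin (2 * g) → ZMod p) = symp g (ZMod p) (a : Fin (2 * g) → ZMod p) b) :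
    ∃ Ψ : (Fin (2 * g) → ZMod p) ≃ₗ[ZMod p] (Fin (2 * g) → ZMod p),
      (∀ x y, symp g (ZMod p) (Ψ x) (Ψ y) = symp g (ZMod p) x y) ∧
      ∀ v : G, Ψ (v : Fin (2 * g) → ZMod p) = ((ψ v : G') : Fin (2 * g) → ZMod p) :=
  witt_extension_symplectic_general p hp g G G' ψ hψ
end
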